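/- Let A be an m×n complex matrix (m ≥ n) with nonzero rows a_1*, …, a_m*, and suppose A*A = σ²·I_n for some σ > 0 (equivalently, k(A) = 1). Let x solve Ax = b, and let (x_k) be the randomized Kaczmarz iterates with row j chosen with probability ‖a_j‖₂²/‖A‖_F² at each step, independently. Then equality holds in the convergence estimate: E‖x_k − x‖₂² = (1 − κ(A)^{-2})^k · ‖x_0 − x‖₂² for all k ≥ 0, where κ(A) = ‖A‖_F/σ. -/

import Mathlib

/-! Each Kaczmarz step replaces the error `e = y - x` by its orthogonal projection onto
`(a j)ᗮ`, so by Pythagoras `‖e‖²` drops by exactly `|⟨a j, e⟩|² / ‖a j‖²`. With the weights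
`‖a j‖² / ‖A‖_F²` the expected drop is `‖A e‖² / ‖A‖_F² = σ² ‖e‖² / ‖A‖_F²`, an equality
because `A*A = σ² I`. Hence every step multiplies the expected squared error by exactly
`1 - σ² / ‖A‖_F²`, and conditioning on the first index gives the `k`-th power. -/
open scoped BigOperators

/-- One step of the Kaczmarz iteration: orthogonal projection of `y` onto the
hyperplane `{u : ⟨a j, u⟩ = b j}`. -/
noncomputable def kacStep {m n : ℕ} (a : Fin m → EuclideanSpace ℂ (Fin n))
    (b : Fin m → ℂ) (j : Fin m) (y : EuclideanSpace ℂ (Fin n)) :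
    EuclideanSpace ℂ (Fin n) :=
  y + ((b j - (inner ℂ (a j) y : ℂ)) / ((‖a j‖ : ℂ) ^ 2)) • a j

/-- The Kaczmarz iterate obtained from `x0` by applying the steps with the row
indices listed in `l` (in order). -/
noncomputable def kacIter {m n : ℕ} (a : Fin m → EuclideanSpace ℂ (Fin n))
    (b : Fin m → ℂ) (x0 : EuclideanSpace ℂ (Fin n)) (l : List (Fin m)) :
    EuclideanSpace ℂ (Fin n) :=
  l.foldl (fun y j => kacStep a b j y) x0

/-- The squared Frobenius norm `‖A‖_F² = ∑ j ‖a j‖₂²`. -/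
noncomputable def frobSq {m n : ℕ} (a : Fin m → EuclideanSpace ℂ (Fin n)) : ℝ :=
  ∑ j, ‖a j‖ ^ 2

/-- The smallest singular value `σ_min(A) = inf {‖Az‖₂ : ‖z‖₂ = 1}`, where
`‖Az‖₂² = ∑ j ‖⟨a j, z⟩‖²`. -/
noncomputable def sigmaMin {m n : ℕ} (a : Fin m → EuclideanSpace ℂ (Fin n)) : ℝ :=
  sInf {r : ℝ | ∃ z : EuclideanSpace ℂ (Fin n), ‖z‖ = 1 ∧
    r = Real.sqrt (∑ j, ‖(inner ℂ (a j) z : ℂ)‖ ^ 2)}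

/-- The scaled condition number `κ(A) = ‖A‖_F / σ_min(A)`. -/
noncomputable def scaledCond {m n : ℕ} (a : Fin m → EuclideanSpace ℂ (Fin n)) : ℝ :=
  Real.sqrt (frobSq a) / sigmaMin a

theorem sum_prod_mul_foldl_ofFn_eq_pow_mul {ι α R : Type*} [Fintype ι] [CommSemiring R]
    (p : ι → R) (step : α → ι → α) (g : α → R) (c : R)
    (hstep : ∀ y, ∑ j, p j * g (step y j) = c * g y) (k : ℕ) (x₀ : α) :
    ∑ ω : Fin k → ι, (∏ i, p (ω i)) * g ((List.ofFn ω).foldl step x₀) = c ^ k * g x₀ := by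
  induction k generalizing x₀ with
  | zero => simp
  | succ k ih =>
    rw [← (Fin.consEquiv fun _ => ι).sum_comp, Fintype.sum_prod_type]
    simp only [Fin.consEquiv_apply, Fin.prod_univ_succ, Fin.cons_zero, Fin.cons_succ,
      List.ofFn_succ, List.foldl_cons, mul_assoc, ← Finset.mul_sum, ih]
    simp only [mul_left_comm _ (c ^ k), ← Finset.mul_sum, hstep]
    ring

theorem norm_sub_inner_div_smul_sq {𝕜 E : Type*} [RCLike 𝕜] [NormedAddCommGroup E]
    [InnerProductSpace 𝕜 E] (u v : E) :
    ‖v - (inner 𝕜 u v / (‖u‖ : 𝕜) ^ 2) • u‖ ^ 2 = ‖v‖ ^ 2 - ‖inner 𝕜 u v‖ ^ 2 / ‖u‖ ^ 2 := by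
  rcases eq_or_ne u 0 with rfl | hu
  · simp
  rw [norm_sub_sq (𝕜 := 𝕜), inner_smul_right, norm_smul, ← inner_conj_symm u v,
    div_mul_eq_mul_div, RCLike.conj_mul, ← RCLike.ofReal_pow, ← RCLike.ofReal_pow,
    ← RCLike.ofReal_div, RCLike.ofReal_re, norm_div, RCLike.norm_ofReal, RCLike.norm_conj,
    abs_pow, abs_norm]
  field_simp [norm_ne_zero_iff.mpr hu]
  ring

section Kaczmarz

variable {m n : ℕ} (a : Fin m → EuclideanSpace ℂ (Fin n)) (b : Fin m → ℂ)
  {x : EuclideanSpace ℂ (Fin n)}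

theorem kacStep_sub_of_inner_eq (hx : ∀ j, inner ℂ (a j) x = b j) (j : Fin m)
    (y : EuclideanSpace ℂ (Fin n)) :
    kacStep a b j y - x = (y - x) - (inner ℂ (a j) (y - x) / (‖a j‖ : ℂ) ^ 2) • a j := by
  rw [kacStep, ← hx j, inner_sub_right, ← neg_sub (inner ℂ (a j) y), neg_div, neg_smul]
  abel

theorem norm_kacStep_sub_sq (hx : ∀ j, inner ℂ (a j) x = b j) (j : Fin m)
    (y : EuclideanSpace ℂ (Fin n)) :
    ‖kacStep a b j y - x‖ ^ 2 = ‖y - x‖ ^ 2 - ‖inner ℂ (a j) (y - x)‖ ^ 2 / ‖a j‖ ^ 2 := by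
  rw [kacStep_sub_of_inner_eq a b hx]
  exact norm_sub_inner_div_smul_sq _ _

theorem frobSq_nonneg : 0 ≤ frobSq a :=
  Finset.sum_nonneg fun _ _ => sq_nonneg _

theorem eq_zero_of_frobSq_eq_zero (hF : frobSq a = 0) (j : Fin m) : a j = 0 := by
  rw [frobSq, Finset.sum_eq_zero_iff_of_nonneg fun _ _ => by positivity] at hF
  simpa using hF j (Finset.mem_univ j)

theorem sum_mul_norm_kacStep_sub_sq {σ : ℝ} (hσ : σ ≠ 0)
    (hiso : ∀ z : EuclideanSpace ℂ (Fin n), ∑ j, ‖inner ℂ (a j) z‖ ^ 2 = σ ^ 2 * ‖z‖ ^ 2)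
    (hx : ∀ j, inner ℂ (a j) x = b j) (y : EuclideanSpace ℂ (Fin n)) :
    ∑ j, ‖a j‖ ^ 2 / frobSq a * ‖kacStep a b j y - x‖ ^ 2
      = (1 - σ ^ 2 / frobSq a) * ‖y - x‖ ^ 2 := by
  by_cases hF : frobSq a = 0
  · -- all rows vanish, and then `hiso` forces `y = x`
    have hyx : y - x = 0 := by
      simpa [eq_zero_of_frobSq_eq_zero a hF, hσ] using hiso (y - x)
    simp [hF, hyx]
  have hterm : ∀ j, ‖a j‖ ^ 2 / frobSq a * ‖kacStep a b j y - x‖ ^ 2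
      = ‖a j‖ ^ 2 / frobSq a * ‖y - x‖ ^ 2 - ‖inner ℂ (a j) (y - x)‖ ^ 2 / frobSq a := by
    intro j
    rcases eq_or_ne (a j) 0 with h | h
    · simp [h]
    rw [norm_kacStep_sub_sq a b hx]
    field_simp [norm_ne_zero_iff.mpr h]
  rw [Finset.sum_congr rfl fun j _ => hterm j, Finset.sum_sub_distrib, ← Finset.sum_div,
    hiso, ← Finset.sum_mul, ← Finset.sum_div, ← frobSq]
  field_simp

end Kaczmarz

theorem randomized_kaczmarz_equality_for_isometry_general
    (m n : ℕ)
    (a : Fin m → EuclideanSpace ℂ (Fin n))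
    (σ : ℝ) (hσ : 0 < σ)
    (hiso : ∀ z : EuclideanSpace ℂ (Fin n),
      ∑ j, ‖(inner ℂ (a j) z : ℂ)‖ ^ 2 = σ ^ 2 * ‖z‖ ^ 2)
    (b : Fin m → ℂ)
    (x : EuclideanSpace ℂ (Fin n)) (hx : ∀ j, (inner ℂ (a j) x : ℂ) = b j)
    (x0 : EuclideanSpace ℂ (Fin n)) (k : ℕ) :
    ∑ ω : Fin k → Fin m,
        (∏ i, ‖a (ω i)‖ ^ 2 / frobSq a) * ‖kacIter a b x0 (List.ofFn ω) - x‖ ^ 2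
      = (1 - ((Real.sqrt (frobSq a) / σ)⁻¹) ^ 2) ^ k * ‖x0 - x‖ ^ 2 := by
  have hrate : ((Real.sqrt (frobSq a) / σ)⁻¹) ^ 2 = σ ^ 2 / frobSq a := by
    rw [inv_div, div_pow, Real.sq_sqrt (frobSq_nonneg a)]
  rw [hrate]
  exact sum_prod_mul_foldl_ofFn_eq_pow_mul _ (fun y j => kacStep a b j y) (‖· - x‖ ^ 2) _
    (sum_mul_norm_kacStep_sub_sq a b hσ.ne' hiso hx) k x0

/-- **The convergence estimate is attained when `k(A) = 1`**: if `A*A = σ²·I`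
(equivalently `‖Az‖₂ = σ‖z‖₂` for all `z`, i.e. `∑ j |⟨a j, z⟩|² = σ²‖z‖₂²`),
then the randomized Kaczmarz iterates satisfy
`E ‖x_k − x‖₂² = (1 − κ(A)⁻²)^k ‖x0 − x‖₂²` with `κ(A) = ‖A‖_F/σ`. -/
theorem randomized_kaczmarz_equality_for_isometry
    (m n : ℕ) (hmn : n ≤ m)
    (a : Fin m → EuclideanSpace ℂ (Fin n)) (ha : ∀ j, a j ≠ 0)
    (σ : ℝ) (hσ : 0 < σ)
    (hiso : ∀ z : EuclideanSpace ℂ (Fin n),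
      ∑ j, ‖(inner ℂ (a j) z : ℂ)‖ ^ 2 = σ ^ 2 * ‖z‖ ^ 2)
    (b : Fin m → ℂ)
    (x : EuclideanSpace ℂ (Fin n)) (hx : ∀ j, (inner ℂ (a j) x : ℂ) = b j)
    (x0 : EuclideanSpace ℂ (Fin n)) (k : ℕ) :
    ∑ ω : Fin k → Fin m,
        (∏ i, ‖a (ω i)‖ ^ 2 / frobSq a) * ‖kacIter a b x0 (List.ofFn ω) - x‖ ^ 2
      = (1 - ((Real.sqrt (frobSq a) / σ)⁻¹) ^ 2) ^ k * ‖x0 - x‖ ^ 2 :=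
  randomized_kaczmarz_equality_for_isometry_general m n a σ hσ hiso b x hx x0 k
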